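/- Let μ₁,…,μ_G be Borel probability measures on ℝⁿ with finite second moments, let ν be a Borel probability measure on ℝⁿ with finite second moment, let w₁,…,w_G be positive reals with Σₖ wₖ = 1, and for each k let Tₖ be a transport map from μₖ to ν. Then the individual fairness error satisfies E_ind = Σₖ wₖ ∫‖Tₖ(x) − x‖² dμₖ(x) − Σₖ wₖ ‖E[ν] − E[μₖ]‖². -/

import Mathlib

open MeasureTheory
open scoped RealInnerProductSpace

noncomputable section

/-- `T` is a transport map from `μ` to `ν`: a measurable map pushing `μ` forward to `ν`. -/
def IsTransportMap {n : ℕ} (μ ν : Measure (EuclideanSpace ℝ (Fin n)))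
    (T : EuclideanSpace ℝ (Fin n) → EuclideanSpace ℝ (Fin n)) : Prop :=
  Measurable T ∧ μ.map T = ν

/-- The quadratic cost `∫ ‖T x - x‖² dμ` of a transport map. -/
def transportCost {n : ℕ} (μ : Measure (EuclideanSpace ℝ (Fin n)))
    (T : EuclideanSpace ℝ (Fin n) → EuclideanSpace ℝ (Fin n)) : ℝ :=
  ∫ x, ‖T x - x‖ ^ 2 ∂μ

/-- `π` is a coupling of `μ` and `ν`. -/
def IsCoupling {n : ℕ} (μ ν : Measure (EuclideanSpace ℝ (Fin n)))
    (π : Measure (EuclideanSpace ℝ (Fin n) × EuclideanSpace ℝ (Fin n))) : Prop :=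
  IsProbabilityMeasure π ∧ π.map Prod.fst = μ ∧ π.map Prod.snd = ν

/-- Squared Wasserstein-2 distance: infimum of the quadratic transport cost over couplings. -/
def W2sq {n : ℕ} (μ ν : Measure (EuclideanSpace ℝ (Fin n))) : ℝ :=
  sInf {c : ℝ | ∃ π, IsCoupling μ ν π ∧ c = ∫ p, ‖p.1 - p.2‖ ^ 2 ∂π}

/-- `T` is an optimal transport map from `μ` to `ν`: it is a transport map minimizing the
quadratic cost among all transport maps from `μ` to `ν`. -/
def IsOptimalTransportMap {n : ℕ} (μ ν : Measure (EuclideanSpace ℝ (Fin n)))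
    (T : EuclideanSpace ℝ (Fin n) → EuclideanSpace ℝ (Fin n)) : Prop :=
  IsTransportMap μ ν T ∧
    ∀ S, IsTransportMap μ ν S → transportCost μ T ≤ transportCost μ S

/-- `μ` has finite second moment. -/
def FiniteSecondMoment {n : ℕ} (μ : Measure (EuclideanSpace ℝ (Fin n))) : Prop :=
  Integrable (fun x => ‖x‖ ^ 2) μ

/-- Translation of a measure by the vector `z`. -/
def translateMeasure {n : ℕ} (μ : Measure (EuclideanSpace ℝ (Fin n)))
    (z : EuclideanSpace ℝ (Fin n)) : Measure (EuclideanSpace ℝ (Fin n)) :=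
  μ.map (fun x => x + z)

/-- Mean vector `E[μ] = ∫ x dμ(x)` of a measure. -/
def meanVec {n : ℕ} (μ : Measure (EuclideanSpace ℝ (Fin n))) : EuclideanSpace ℝ (Fin n) :=
  ∫ x, x ∂μ

/-- `ν` is a (Wasserstein) barycenter of the family `μ` with weights `w`:
a probability measure minimizing `fun lam => ∑ k, w k * W2sq (μ k) lam`. -/
def IsBarycenter {n G : ℕ} (μ : Fin G → Measure (EuclideanSpace ℝ (Fin n))) (w : Fin G → ℝ)
    (ν : Measure (EuclideanSpace ℝ (Fin n))) : Prop :=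
  IsProbabilityMeasure ν ∧
    ∀ lam : Measure (EuclideanSpace ℝ (Fin n)), IsProbabilityMeasure lam →
      ∑ k, w k * W2sq (μ k) ν ≤ ∑ k, w k * W2sq (μ k) lam

/-!
Writing `f = T - id`, the integrand is `½‖f x - f y‖²`, and expanding the square shows that
its double integral against `μ ⊗ μ` is the variance `∫ ‖f‖² dμ - ‖∫ f dμ‖²` of `f`. Since
`T` pushes `μ` to `ν`, the mean of `f` is `E[ν] - E[μ]`, so the identity already holds for
each group separately.
-/

section Variance

variable {α E : Type*} [MeasurableSpace α] [NormedAddCommGroup E] [InnerProductSpace ℝ E]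
  [CompleteSpace E] {μ : Measure α} [IsProbabilityMeasure μ] {f : α → E}

lemma integral_half_norm_sub_sq (hf : MemLp f 2 μ) (a : E) :
    ∫ y, (1 / 2 : ℝ) * ‖a - f y‖ ^ 2 ∂μ =
      (1 / 2) * ‖a‖ ^ 2 + (1 / 2) * ∫ y, ‖f y‖ ^ 2 ∂μ - ⟪a, ∫ y, f y ∂μ⟫ := by
  have hf1 : Integrable f μ := hf.integrable one_le_two
  have hf2 : Integrable (fun y => ‖f y‖ ^ 2) μ := (memLp_two_iff_integrable_sq_norm hf.1).1 hf
  have hexpand : ∀ y, (1 / 2 : ℝ) * ‖a - f y‖ ^ 2 =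
      ((1 / 2) * ‖a‖ ^ 2 + (1 / 2) * ‖f y‖ ^ 2) - ⟪a, f y⟫ := fun y => by
    rw [norm_sub_sq_real]; ring
  simp_rw [hexpand]
  rw [integral_sub (by fun_prop) (hf1.const_inner a),
    integral_add (integrable_const _) (hf2.const_mul _), integral_const, integral_const_mul,
    integral_inner hf1 a, probReal_univ, one_smul]

theorem integral_integral_half_norm_sub_sq (hf : MemLp f 2 μ) :
    ∫ x, ∫ y, (1 / 2 : ℝ) * ‖f x - f y‖ ^ 2 ∂μ ∂μ =
      ∫ x, ‖f x‖ ^ 2 ∂μ - ‖∫ x, f x ∂μ‖ ^ 2 := by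
  have hf1 : Integrable f μ := hf.integrable one_le_two
  have hf2 : Integrable (fun x => ‖f x‖ ^ 2) μ := (memLp_two_iff_integrable_sq_norm hf.1).1 hf
  simp_rw [integral_half_norm_sub_sq hf, real_inner_comm (∫ y, f y ∂μ)]
  rw [integral_sub (by fun_prop) (hf1.const_inner _),
    integral_add (hf2.const_mul _) (integrable_const _), integral_const, integral_const_mul,
    integral_inner hf1, real_inner_self_eq_norm_sq, probReal_univ, one_smul]
  ring

end Variance

section Transport

variable {n : ℕ} {μ ν : Measure (EuclideanSpace ℝ (Fin n))}
  {T : EuclideanSpace ℝ (Fin n) → EuclideanSpace ℝ (Fin n)}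

lemma FiniteSecondMoment.memLp_id (hμ : FiniteSecondMoment μ) :
    MemLp (fun x => x) 2 μ :=
  (memLp_two_iff_integrable_sq_norm aestronglyMeasurable_id).2 hμ

lemma IsTransportMap.memLp_two (hT : IsTransportMap μ ν T) (hν : FiniteSecondMoment ν) :
    MemLp T 2 μ := by
  have hν' := hν.memLp_id
  rw [← hT.2] at hν'
  exact (memLp_map_measure_iff aestronglyMeasurable_id hT.1.aemeasurable).1 hν'

lemma IsTransportMap.integral_eq_meanVec (hT : IsTransportMap μ ν T) :
    ∫ x, T x ∂μ = meanVec ν := by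
  rw [meanVec, ← hT.2]
  exact (integral_map hT.1.aemeasurable aestronglyMeasurable_id).symm

theorem IsTransportMap.integral_integral_half_norm_sub_sq [IsProbabilityMeasure μ]
    (hT : IsTransportMap μ ν T) (hμ : FiniteSecondMoment μ) (hν : FiniteSecondMoment ν) :
    ∫ x, ∫ y, (1 / 2 : ℝ) * ‖(T x - T y) - (x - y)‖ ^ 2 ∂μ ∂μ =
      ∫ x, ‖T x - x‖ ^ 2 ∂μ - ‖meanVec ν - meanVec μ‖ ^ 2 := by
  have hTm := hT.memLp_two hν
  have hid := hμ.memLp_id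
  have hdisp : ∀ x y : EuclideanSpace ℝ (Fin n), T x - T y - (x - y) = (T x - x) - (T y - y) :=
    fun x y => by abel
  simp_rw [hdisp]
  rw [_root_.integral_integral_half_norm_sub_sq (f := fun x => T x - x) (hTm.sub hid),
    integral_sub (hTm.integrable one_le_two) (hid.integrable one_le_two),
    hT.integral_eq_meanVec]
  rfl

end Transport

theorem statement12_general (n G : ℕ) (μ : Fin G → Measure (EuclideanSpace ℝ (Fin n)))
    [∀ k, IsProbabilityMeasure (μ k)] (h2 : ∀ k, FiniteSecondMoment (μ k))
    (ν : Measure (EuclideanSpace ℝ (Fin n)))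
    (hν2 : FiniteSecondMoment ν)
    (w : Fin G → ℝ)
    (T : Fin G → EuclideanSpace ℝ (Fin n) → EuclideanSpace ℝ (Fin n))
    (hT : ∀ k, IsTransportMap (μ k) ν (T k)) :
    (∑ k, w k * ∫ x, ∫ y, (1 / 2 : ℝ) * ‖(T k x - T k y) - (x - y)‖ ^ 2 ∂(μ k) ∂(μ k)) =
      (∑ k, w k * ∫ x, ‖T k x - x‖ ^ 2 ∂(μ k)) -
        ∑ k, w k * ‖meanVec ν - meanVec (μ k)‖ ^ 2 := by
  rw [← Finset.sum_sub_distrib]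
  refine Finset.sum_congr rfl fun k _ => ?_
  rw [← mul_sub, (hT k).integral_integral_half_norm_sub_sq (h2 k) hν2]

theorem statement12 (n G : ℕ) (μ : Fin G → Measure (EuclideanSpace ℝ (Fin n)))
    [∀ k, IsProbabilityMeasure (μ k)] (h2 : ∀ k, FiniteSecondMoment (μ k))
    (ν : Measure (EuclideanSpace ℝ (Fin n))) [IsProbabilityMeasure ν]
    (hν2 : FiniteSecondMoment ν)
    (w : Fin G → ℝ) (hw : ∀ k, 0 < w k) (hsum : ∑ k, w k = 1)
    (T : Fin G → EuclideanSpace ℝ (Fin n) → EuclideanSpace ℝ (Fin n))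
    (hT : ∀ k, IsTransportMap (μ k) ν (T k)) :
    (∑ k, w k * ∫ x, ∫ y, (1 / 2 : ℝ) * ‖(T k x - T k y) - (x - y)‖ ^ 2 ∂(μ k) ∂(μ k)) =
      (∑ k, w k * ∫ x, ‖T k x - x‖ ^ 2 ∂(μ k)) -
        ∑ k, w k * ‖meanVec ν - meanVec (μ k)‖ ^ 2 :=
  statement12_general n G μ h2 ν hν2 w T hT
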